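/- Let X, Y be random variables on finite sets and suppose there is an event G with P[G^c] ≤ 2λ (λ < 1/2) such that, conditioned on G, X is a deterministic function of Y and Y is a deterministic function of X. Then H(Y) ≤ H(X) + h(2λ) + 2λ·log|range(Y)|, where h is the binary entropy function. -/

import Mathlib

noncomputable section

open Real

/-- Probability that the random variable `X` takes value `a` under pmf `μ`. -/
def pr {Ω α : Type*} [Fintype Ω] [DecidableEq α] (μ : Ω → ℝ) (X : Ω → α) (a : α) : ℝ :=
  ∑ ω, if X ω = a then μ ω else 0

/-- Shannon entropy (base 2) of a discrete random variable. -/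
def ent {Ω α : Type*} [Fintype Ω] [Fintype α] [DecidableEq α] (μ : Ω → ℝ) (X : Ω → α) : ℝ :=
  -∑ a, pr μ X a * Real.logb 2 (pr μ X a)

/-- Conditional entropy H(X|Y). -/
def condEnt {Ω α β : Type*} [Fintype Ω] [Fintype α] [Fintype β] [DecidableEq α] [DecidableEq β]
    (μ : Ω → ℝ) (X : Ω → α) (Y : Ω → β) : ℝ :=
  ent μ (fun ω => (X ω, Y ω)) - ent μ Y

/-- Mutual information I(X;Y). -/
def mutInfo {Ω α β : Type*} [Fintype Ω] [Fintype α] [Fintype β] [DecidableEq α] [DecidableEq β]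
    (μ : Ω → ℝ) (X : Ω → α) (Y : Ω → β) : ℝ :=
  ent μ X + ent μ Y - ent μ (fun ω => (X ω, Y ω))

/-- Conditional mutual information I(X;Y|Z). -/
def condMutInfo {Ω α β γ : Type*} [Fintype Ω] [Fintype α] [Fintype β] [Fintype γ]
    [DecidableEq α] [DecidableEq β] [DecidableEq γ]
    (μ : Ω → ℝ) (X : Ω → α) (Y : Ω → β) (Z : Ω → γ) : ℝ :=
  ent μ (fun ω => (X ω, Z ω)) + ent μ (fun ω => (Y ω, Z ω))
    - ent μ (fun ω => (X ω, Y ω, Z ω)) - ent μ Z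

/-- `μ` is a probability mass function on the finite sample space `Ω`. -/
def IsPMF {Ω : Type*} [Fintype Ω] (μ : Ω → ℝ) : Prop :=
  (∀ ω, 0 ≤ μ ω) ∧ ∑ ω, μ ω = 1

/-- Binary entropy function (base 2). -/
def binEnt (x : ℝ) : ℝ := -(x * Real.logb 2 x) - (1 - x) * Real.logb 2 (1 - x)

/-! Split `μ` into its restrictions to `G` and to `Gᶜ`, of masses `1 - q` and `q`. On `G` the
variables `X` and `Y` induce the same partition, so the restricted entropies of `X` and `Y` agree.
Subadditivity of `x ↦ -x log x` together with the uniform bound on the `Gᶜ` part, and concavity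
for the `G` part, give `H(Y) ≤ H(X) + h(q) + q log |B|`. The trivial bound `H(Y) ≤ log |B|` is the
same inequality at `q = 1`, and the right-hand side is concave in `q`, so it also holds at every
`t ∈ [q, 1]`, in particular at `t = 2λ`. -/

open Finset

section Pr

variable {Ω α : Type*} [Fintype Ω] [DecidableEq α]

lemma pr_nonneg {ν : Ω → ℝ} (hν : ∀ ω, 0 ≤ ν ω) (Z : Ω → α) (a : α) : 0 ≤ pr ν Z a :=
  sum_nonneg fun ω _ => by split_ifs <;> simp [hν ω]

lemma pr_le_sum {ν : Ω → ℝ} (hν : ∀ ω, 0 ≤ ν ω) (Z : Ω → α) (a : α) : pr ν Z a ≤ ∑ ω, ν ω :=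
  sum_le_sum fun ω _ => by split_ifs <;> simp [hν ω]

lemma pr_add (ν ν' : Ω → ℝ) (Z : Ω → α) (a : α) : pr (ν + ν') Z a = pr ν Z a + pr ν' Z a := by
  simp only [pr, ← sum_add_distrib]
  exact sum_congr rfl fun ω _ => by split_ifs <;> simp

lemma sum_pr [Fintype α] (ν : Ω → ℝ) (Z : Ω → α) : ∑ a, pr ν Z a = ∑ ω, ν ω := by
  simp only [pr]
  rw [sum_comm]
  simp

end Pr

lemma binEnt_eq_binEntropy_div_log_two (x : ℝ) : binEnt x = binEntropy x / log 2 := by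
  rw [binEntropy_eq_negMulLog_add_negMulLog_one_sub]
  simp only [binEnt, negMulLog, logb]
  ring

lemma negMulLog_add_le {a b : ℝ} (ha : 0 ≤ a) (hb : 0 ≤ b) :
    negMulLog (a + b) ≤ negMulLog a + negMulLog b := by
  rcases ha.eq_or_lt with rfl | ha
  · simp
  rcases hb.eq_or_lt with rfl | hb
  · simp
  have hla : log a ≤ log (a + b) := log_le_log ha (by linarith)
  have hlb : log b ≤ log (a + b) := log_le_log hb (by linarith)
  simp only [negMulLog]
  nlinarith

lemma mul_negMulLog_div {p : ℝ} (hp : p ≠ 0) (a : ℝ) :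
    p * negMulLog (a / p) = negMulLog a + a * log p := by
  rw [div_eq_mul_inv, negMulLog_mul]
  simp only [negMulLog, log_inv]
  field_simp

lemma negMulLog_add_mul_log_nonneg {c q : ℝ} (hc : 0 ≤ c) (hcq : c ≤ q) :
    0 ≤ negMulLog c + c * log q := by
  rcases hc.eq_or_lt with rfl | hc
  · simp
  have : log c ≤ log q := log_le_log hc hcq
  simp only [negMulLog]
  nlinarith

/-- Concavity of `negMulLog` at the weights `p, q`, written through
`p * negMulLog (a / p) = negMulLog a + a * log p` so that `p` or `q` may vanish. -/
lemma negMulLog_add_ge {a c p q : ℝ} (ha : 0 ≤ a) (hap : a ≤ p) (hc : 0 ≤ c) (hcq : c ≤ q)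
    (hpq : p + q = 1) :
    negMulLog a + a * log p + (negMulLog c + c * log q) ≤ negMulLog (a + c) := by
  rcases (ha.trans hap).eq_or_lt with rfl | hp
  · obtain rfl : a = 0 := le_antisymm hap ha
    obtain rfl : q = 1 := by linarith
    simp
  rcases (hc.trans hcq).eq_or_lt with rfl | hq
  · obtain rfl : c = 0 := le_antisymm hcq hc
    obtain rfl : p = 1 := by linarith
    simp
  have h := concaveOn_negMulLog.2 (Set.mem_Ici.2 (div_nonneg ha hp.le))
    (Set.mem_Ici.2 (div_nonneg hc hq.le)) hp.le hq.le hpq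
  simp only [smul_eq_mul, mul_div_cancel₀ _ hp.ne', mul_div_cancel₀ _ hq.ne'] at h
  rwa [mul_negMulLog_div hp.ne', mul_negMulLog_div hq.ne'] at h

lemma sum_negMulLog_le {α : Type*} [Fintype α] {f : α → ℝ} (hf : ∀ a, 0 ≤ f a) :
    ∑ a, negMulLog (f a) ≤ negMulLog (∑ a, f a) + (∑ a, f a) * log (Fintype.card α) := by
  rcases isEmpty_or_nonempty α with hα | hα
  · simp
  set N : ℝ := (Fintype.card α : ℝ)
  have hN : 0 < N := by positivity
  have jensen := concaveOn_negMulLog.le_map_sum (t := univ) (w := fun _ => N⁻¹) (p := f)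
    (fun _ _ => by positivity) (by simp [N]) (fun a _ => hf a)
  simp only [smul_eq_mul, ← mul_sum] at jensen
  calc ∑ a, negMulLog (f a) = N * (N⁻¹ * ∑ a, negMulLog (f a)) := by field_simp
    _ ≤ N * negMulLog (N⁻¹ * ∑ a, f a) := by gcongr
    _ = _ := by rw [← div_eq_inv_mul, mul_negMulLog_div hN.ne']

/-- Entropy in nats; the weights `ν` need not sum to one. -/
def natEnt {Ω α : Type*} [Fintype Ω] [Fintype α] [DecidableEq α] (ν : Ω → ℝ) (Z : Ω → α) : ℝ :=
  ∑ a, negMulLog (pr ν Z a)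

section NatEnt

variable {Ω α : Type*} [Fintype Ω] [Fintype α] [DecidableEq α]

lemma ent_eq_natEnt_div_log_two (μ : Ω → ℝ) (Z : Ω → α) : ent μ Z = natEnt μ Z / log 2 := by
  simp only [ent, natEnt, sum_div, ← sum_neg_distrib, negMulLog, logb]
  exact sum_congr rfl fun a _ => by ring

lemma natEnt_nonneg {μ : Ω → ℝ} (hμ : IsPMF μ) (Z : Ω → α) : 0 ≤ natEnt μ Z :=
  sum_nonneg fun a _ => negMulLog_nonneg (pr_nonneg hμ.1 Z a) (hμ.2 ▸ pr_le_sum hμ.1 Z a)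

lemma natEnt_add_le {ν ν' : Ω → ℝ} (hν : ∀ ω, 0 ≤ ν ω) (hν' : ∀ ω, 0 ≤ ν' ω) (Z : Ω → α) :
    natEnt (ν + ν') Z ≤ natEnt ν Z + natEnt ν' Z := by
  simp only [natEnt, pr_add, ← sum_add_distrib]
  exact sum_le_sum fun a _ => negMulLog_add_le (pr_nonneg hν Z a) (pr_nonneg hν' Z a)

lemma natEnt_le {ν : Ω → ℝ} (hν : ∀ ω, 0 ≤ ν ω) (Z : Ω → α) :
    natEnt ν Z ≤ negMulLog (∑ ω, ν ω) + (∑ ω, ν ω) * log (Fintype.card α) := by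
  have h := sum_negMulLog_le (pr_nonneg hν Z)
  rwa [sum_pr] at h

lemma natEnt_le_log_card {μ : Ω → ℝ} (hμ : IsPMF μ) (Z : Ω → α) :
    natEnt μ Z ≤ log (Fintype.card α) := by
  simpa [hμ.2] using natEnt_le hμ.1 Z

/-- With `ν` the restriction of a pmf to an event `E` of mass `p`, this is
`H(Z) ≥ H(Z | 1_E) ≥ p H(Z | E)`. -/
lemma natEnt_le_natEnt_add {ν ν' : Ω → ℝ} (hν : ∀ ω, 0 ≤ ν ω) (hν' : ∀ ω, 0 ≤ ν' ω)
    (hmass : ∑ ω, ν ω + ∑ ω, ν' ω = 1) (Z : Ω → α) :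
    natEnt ν Z ≤ natEnt (ν + ν') Z + negMulLog (∑ ω, ν ω) := by
  have pointwise : ∀ a, negMulLog (pr ν Z a) + pr ν Z a * log (∑ ω, ν ω)
      + (negMulLog (pr ν' Z a) + pr ν' Z a * log (∑ ω, ν' ω)) ≤ negMulLog (pr (ν + ν') Z a) :=
    fun a => pr_add ν ν' Z a ▸ negMulLog_add_ge (pr_nonneg hν Z a) (pr_le_sum hν Z a)
      (pr_nonneg hν' Z a) (pr_le_sum hν' Z a) hmass
  have rest : 0 ≤ ∑ a, (negMulLog (pr ν' Z a) + pr ν' Z a * log (∑ ω, ν' ω)) :=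
    sum_nonneg fun a _ => negMulLog_add_mul_log_nonneg (pr_nonneg hν' Z a) (pr_le_sum hν' Z a)
  have total := sum_le_sum fun a (_ : a ∈ univ) => pointwise a
  rw [sum_add_distrib, sum_add_distrib, ← sum_mul, sum_pr] at total
  simp only [natEnt, negMulLog] at total rest ⊢
  linarith

lemma natEnt_eq_sum_mul_log (ν : Ω → ℝ) (Z : Ω → α) :
    natEnt ν Z = ∑ ω, -(ν ω * log (pr ν Z (Z ω))) := by
  simp only [natEnt, negMulLog, neg_mul, sum_neg_distrib, pr, sum_mul, ite_mul, zero_mul]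
  rw [sum_comm]
  simp

lemma natEnt_eq_of_iff {β : Type*} [Fintype β] [DecidableEq β] {ν : Ω → ℝ} {X : Ω → α}
    {Y : Ω → β} (h : ∀ ω ω', ν ω ≠ 0 → ν ω' ≠ 0 → (X ω = X ω' ↔ Y ω = Y ω')) :
    natEnt ν X = natEnt ν Y := by
  rw [natEnt_eq_sum_mul_log, natEnt_eq_sum_mul_log]
  refine sum_congr rfl fun ω _ => ?_
  by_cases hω : ν ω = 0
  · simp [hω]
  congr 3
  refine sum_congr rfl fun ω' _ => ?_
  by_cases hω' : ν ω' = 0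
  · simp [hω']
  simp only [h ω' ω hω' hω]

end NatEnt

section Fano

variable {Ω A B : Type*} [Fintype Ω] [Fintype A] [Fintype B] [DecidableEq A] [DecidableEq B]

lemma natEnt_le_of_iff_on {μ : Ω → ℝ} (hμ : IsPMF μ) {X : Ω → A} {Y : Ω → B} {G : Set Ω}
    (hbij : ∀ ω ∈ G, ∀ ω' ∈ G, (X ω = X ω' ↔ Y ω = Y ω')) :
    natEnt μ Y ≤ natEnt μ X + binEntropy (∑ ω, Gᶜ.indicator μ ω)
      + (∑ ω, Gᶜ.indicator μ ω) * log (Fintype.card B) := by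
  set good := G.indicator μ
  set bad := Gᶜ.indicator μ
  have hgood : ∀ ω, 0 ≤ good ω := Set.indicator_nonneg fun ω _ => hμ.1 ω
  have hbad : ∀ ω, 0 ≤ bad ω := Set.indicator_nonneg fun ω _ => hμ.1 ω
  have hsplit : good + bad = μ := Set.indicator_self_add_compl G μ
  have hmass : ∑ ω, good ω + ∑ ω, bad ω = 1 := by
    rw [← sum_add_distrib, ← hμ.2, ← hsplit]
    rfl
  have hgoodXY : natEnt good X = natEnt good Y := natEnt_eq_of_iff fun ω ω' hω hω' =>
    hbij ω (Set.mem_of_indicator_ne_zero hω) ω' (Set.mem_of_indicator_ne_zero hω')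
  calc natEnt μ Y ≤ natEnt good Y + natEnt bad Y := hsplit ▸ natEnt_add_le hgood hbad Y
    _ ≤ (natEnt μ X + negMulLog (∑ ω, good ω))
          + (negMulLog (∑ ω, bad ω) + (∑ ω, bad ω) * log (Fintype.card B)) := by
        gcongr ?_ + ?_
        · rw [← hgoodXY, ← hsplit]
          exact natEnt_le_natEnt_add hgood hbad hmass X
        · exact natEnt_le hbad Y
    _ = _ := by
        rw [binEntropy_eq_negMulLog_add_negMulLog_one_sub, ← hmass, add_sub_cancel_right]
        ring

lemma concaveOn_binEntropy_add_mul (L : ℝ) :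
    ConcaveOn ℝ (Set.Icc 0 1) fun s => binEntropy s + s * L :=
  strictConcave_binEntropy.concaveOn.add ((LinearMap.id.smulRight L).concaveOn (convex_Icc 0 1))

lemma natEnt_le_of_iff_on_of_le {μ : Ω → ℝ} (hμ : IsPMF μ) {X : Ω → A} {Y : Ω → B} {G : Set Ω}
    (hbij : ∀ ω ∈ G, ∀ ω' ∈ G, (X ω = X ω' ↔ Y ω = Y ω')) {t : ℝ}
    (hqt : ∑ ω, Gᶜ.indicator μ ω ≤ t) (ht : t ≤ 1) :
    natEnt μ Y ≤ natEnt μ X + binEntropy t + t * log (Fintype.card B) := by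
  set q := ∑ ω, Gᶜ.indicator μ ω
  set g : ℝ → ℝ := fun s => binEntropy s + s * log (Fintype.card B)
  have hq : q ∈ Set.Icc (0 : ℝ) 1 :=
    ⟨sum_nonneg fun ω _ => Set.indicator_nonneg (fun ω _ => hμ.1 ω) ω, hqt.trans ht⟩
  have ht_mem : t ∈ segment ℝ q 1 := by rw [segment_eq_Icc hq.2]; exact ⟨hqt, ht⟩
  have at_q : natEnt μ Y - natEnt μ X ≤ g q := by
    have := natEnt_le_of_iff_on hμ hbij
    linarith
  have at_one : natEnt μ Y - natEnt μ X ≤ g 1 := by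
    have := natEnt_le_log_card hμ Y
    have := natEnt_nonneg hμ X
    simp only [g, binEntropy_one, one_mul]
    linarith
  have := (le_min at_q at_one).trans <|
    (concaveOn_binEntropy_add_mul _).ge_on_segment hq ⟨zero_le_one, le_rfl⟩ ht_mem
  linarith

end Fano

/-- If outside an event of probability at most 2λ the variables X and Y determine each
other, then H(Y) ≤ H(X) + h(2λ) + 2λ log|range Y|. -/
theorem stmt6 {Ω A B : Type*} [Fintype Ω] [Fintype A] [Fintype B] [DecidableEq A] [DecidableEq B]
    (μ : Ω → ℝ) (hμ : IsPMF μ) (X : Ω → A) (Y : Ω → B) (G : Set Ω)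
    (lam : ℝ) (hlam : lam < 1 / 2)
    (hG : ∑ ω, Set.indicator Gᶜ μ ω ≤ 2 * lam)
    (hbij : ∀ ω ∈ G, ∀ ω' ∈ G, (X ω = X ω' ↔ Y ω = Y ω')) :
    ent μ Y ≤ ent μ X + binEnt (2 * lam) + 2 * lam * Real.logb 2 (Fintype.card B) := by
  have hnats := natEnt_le_of_iff_on_of_le hμ hbij hG (by linarith)
  rw [ent_eq_natEnt_div_log_two, ent_eq_natEnt_div_log_two, binEnt_eq_binEntropy_div_log_two,
    logb, ← mul_div_assoc, ← add_div, ← add_div]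
  exact div_le_div_of_nonneg_right hnats (log_pos one_lt_two).le
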